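/- Let B be an n×n symmetric matrix over a field F. Then rank B = max{k : B has a nonzero quasi-principal minor of order k}, where the maximum over the empty set is defined to be 0. In particular, the rank of B equals the index of the last term of qpr(B) that is A or S (and is 0 if no such term exists). -/

import Mathlib

/-!
A nonzero minor of order `k` exhibits `k` linearly independent columns, so `k ≤ rank B`.
Conversely, let `α` index columns of `B` forming a basis of its column space. Every column of
`B` is a combination of those indexed by `α`, and this survives restricting to the rows `α`, so
`rank B[α] = rank B[α, :]`; by symmetry this is `rank B[:, α] = |α| = rank B`. Hence the
principal minor `det B[α]` of order `rank B` is nonzero. A letter of `qpr(B)` is `N` exactly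
when no quasi-principal minor of that order is nonzero.
-/

open Matrix

/-- The minor of a square matrix `B` lying in the rows indexed by `α` and the columns
indexed by `β` (each listed in increasing order); junk value `0` if `α.card ≠ β.card`. -/
def qMinor {R : Type*} [CommRing R] {m : Type*} [Fintype m] [LinearOrder m]
    (B : Matrix m m R) (α β : Finset m) : R :=
  if h : β.card = α.card then
    (Matrix.of fun i j : Fin α.card =>
      B (α.orderEmbOfFin rfl i) (β.orderEmbOfFin h j)).det
  else 0

/-- `α` and `β` index a quasi-principal submatrix of order `k`, i.e.
`|α| = |β| = k` and `k - 1 ≤ |α ∩ β| (≤ k)`. -/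
def IsQPPair {m : Type*} [DecidableEq m] (k : ℕ) (α β : Finset m) : Prop :=
  α.card = k ∧ β.card = k ∧ k - 1 ≤ (α ∩ β).card

/-- All quasi-principal minors of `B` of order `k` are nonzero. -/
def QPAllNonzero {R : Type*} [CommRing R] {m : Type*} [Fintype m] [LinearOrder m]
    (B : Matrix m m R) (k : ℕ) : Prop :=
  ∀ α β : Finset m, IsQPPair k α β → qMinor B α β ≠ 0

/-- All quasi-principal minors of `B` of order `k` are zero. -/
def QPAllZero {R : Type*} [CommRing R] {m : Type*} [Fintype m] [LinearOrder m]
    (B : Matrix m m R) (k : ℕ) : Prop :=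
  ∀ α β : Finset m, IsQPPair k α β → qMinor B α β = 0

/-- The three possible letters of a qpr-sequence. -/
inductive QPR : Type
  | A
  | S
  | N
deriving DecidableEq

open Classical in
/-- The letter of the qpr-sequence of `B` corresponding to order `k`:
`A` if all quasi-principal minors of order `k` are nonzero, `N` if all are zero,
and `S` otherwise. -/
noncomputable def qprEntry {R : Type*} [CommRing R] {m : Type*} [Fintype m] [LinearOrder m]
    (B : Matrix m m R) (k : ℕ) : QPR :=
  if QPAllNonzero B k then QPR.A
  else if QPAllZero B k then QPR.N
  else QPR.S

/-- A sequence of letters `q 0, …, q (n-1)` (standing for `q_1 ⋯ q_n`) is attainable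
over `F` if it is the qpr-sequence of an `n × n` symmetric matrix over `F`. -/
def Attainable (F : Type*) [Field F] {n : ℕ} (q : Fin n → QPR) : Prop :=
  ∃ B : Matrix (Fin n) (Fin n) F, B.IsSymm ∧ ∀ k : Fin n, qprEntry B ((k : ℕ) + 1) = q k

/-- The Schur complement `B/B[γ] = B[γᶜ] - B[γᶜ, γ] B[γ]⁻¹ B[γ, γᶜ]`,
with rows and columns indexed by `γᶜ` (indexing inherited from `B`). -/
noncomputable def schurCompl {R : Type*} [CommRing R] {n : ℕ}
    (B : Matrix (Fin n) (Fin n) R) (γ : Finset (Fin n)) :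
    Matrix ↥(γᶜ) ↥(γᶜ) R :=
  B.submatrix (fun i : ↥(γᶜ) => (i : Fin n)) (fun j : ↥(γᶜ) => (j : Fin n)) -
    B.submatrix (fun i : ↥(γᶜ) => (i : Fin n)) (fun j : ↥γ => (j : Fin n)) *
      (B.submatrix (fun i : ↥γ => (i : Fin n)) fun j : ↥γ => (j : Fin n))⁻¹ *
      B.submatrix (fun i : ↥γ => (i : Fin n)) fun j : ↥(γᶜ) => (j : Fin n)

/-- The `(m+1) × (m+1)` matrix with block form `[[A, x], [yᵀ, b]]`. -/
def borderMat {R : Type*} [CommRing R] {m : ℕ} (A : Matrix (Fin m) (Fin m) R)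
    (x y : Fin m → R) (b : R) : Matrix (Fin (m + 1)) (Fin (m + 1)) R :=
  Matrix.of fun i j =>
    if hi : (i : ℕ) < m then
      if hj : (j : ℕ) < m then A ⟨i, hi⟩ ⟨j, hj⟩ else x ⟨i, hi⟩
    else
      if hj : (j : ℕ) < m then y ⟨j, hj⟩ else b

open Module Submodule Set

namespace Matrix

variable {R : Type*} [CommRing R] {m n m₀ n₀ : Type*} [Fintype n] [Fintype n₀]

theorem rank_submatrix_eq_of_span_cols_eq (A : Matrix m n R) (r : m₀ → m) (c : n₀ → n)
    (hc : span R (range (A.submatrix id c).col) = span R (range A.col)) :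
    (A.submatrix r c).rank = (A.submatrix r id).rank := by
  have hc' : (A.submatrix r c).col = LinearMap.funLeft R R r ∘ (A.submatrix id c).col := rfl
  have hid : (A.submatrix r id).col = LinearMap.funLeft R R r ∘ A.col := rfl
  rw [rank_eq_finrank_span_cols, rank_eq_finrank_span_cols, hc', hid, range_comp, range_comp,
    span_image, span_image, hc]

theorem det_ne_zero_of_rank_eq_card {K : Type*} [Field K] [Fintype m] [DecidableEq m]
    {A : Matrix m m K} (h : A.rank = Fintype.card m) : A.det ≠ 0 := by
  have hli : LinearIndependent K A.col := by
    rw [linearIndependent_iff_card_eq_finrank_span, ← h, rank_eq_finrank_span_cols]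
    rfl
  exact (isUnit_iff_isUnit_det A).mp (linearIndependent_cols_iff_isUnit.mp hli) |>.ne_zero

theorem IsSymm.exists_det_submatrix_ne_zero {K : Type*} [Field K] [Fintype m] [DecidableEq m]
    {A : Matrix m m K} (hA : A.IsSymm) :
    ∃ s : Finset m, s.card = A.rank ∧ (A.submatrix ((↑) : s → m) (↑)).det ≠ 0 := by
  obtain ⟨b, -, -, hspan, hli⟩ :=
    exists_linearIndepOn_extension (linearIndepOn_empty K A.col) (empty_subset univ)
  obtain ⟨s, rfl⟩ := (toFinite b).exists_finset_coe
  have hrange : range (A.submatrix id ((↑) : s → m)).col = A.col '' s := by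
    rw [image_eq_range]
    rfl
  have hcols : span K (range (A.submatrix id ((↑) : s → m)).col) = span K (range A.col) := by
    rw [hrange, ← image_univ]
    exact le_antisymm (span_mono (image_mono (subset_univ _))) (span_le.mpr hspan)
  have hcard : s.card = A.rank := by
    rw [rank_eq_finrank_span_cols, ← hcols, hrange, image_eq_range]
    simpa using (finrank_span_eq_card hli).symm
  refine ⟨s, hcard, det_ne_zero_of_rank_eq_card ?_⟩
  have htr : A.submatrix ((↑) : s → m) id = (A.submatrix id ((↑) : s → m))ᵀ := by
    ext i j; exact hA.apply j i
  rw [rank_submatrix_eq_of_span_cols_eq A _ _ hcols, htr, rank_transpose,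
    rank_eq_finrank_span_cols, hcols, ← rank_eq_finrank_span_cols, ← hcard, Fintype.card_coe]

end Matrix

section QuasiPrincipal

variable {R : Type*} [CommRing R] {m : Type*} [Fintype m] [LinearOrder m]

theorem qMinor_self (B : Matrix m m R) (s : Finset m) :
    qMinor B s s = (B.submatrix ((↑) : s → m) (↑)).det := by
  rw [qMinor, dif_pos rfl, ← Matrix.det_submatrix_equiv_self (s.orderIsoOfFin rfl).toEquiv]
  rfl

theorem card_le_rank_of_qMinor_ne_zero [IsDomain R] {B : Matrix m m R} {α β : Finset m}
    (h : qMinor B α β ≠ 0) : α.card ≤ B.rank := by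
  rw [qMinor] at h
  split_ifs at h
  · simpa using (Matrix.rank_of_det_ne_zero h).symm.trans_le (B.rank_submatrix_le _ _)
  · exact absurd rfl h

-- Beyond `Fintype.card m` there are no quasi-principal minors, so the entry is vacuously `A`.
theorem qprEntry_ne_N_iff {B : Matrix m m R} {k : ℕ} (hk : k ≤ Fintype.card m) :
    qprEntry B k ≠ QPR.N ↔ ∃ α β : Finset m, IsQPPair k α β ∧ qMinor B α β ≠ 0 := by
  obtain ⟨α, -, hα⟩ := Finset.exists_subset_card_eq (s := Finset.univ) (n := k) (by simpa)
  have hαα : IsQPPair k α α := ⟨hα, hα, by rw [Finset.inter_self, hα]; omega⟩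
  unfold qprEntry QPAllNonzero QPAllZero
  split_ifs with hA hN
  · exact iff_of_true (by simp) ⟨α, α, hαα, hA α α hαα⟩
  · simpa using hN
  · simpa using hN

theorem Matrix.IsSymm.rank_eq_sSup_qMinor_ne_zero {K : Type*} [Field K] {B : Matrix m m K}
    (hB : B.IsSymm) :
    B.rank = sSup {k : ℕ | 1 ≤ k ∧ ∃ α β : Finset m, IsQPPair k α β ∧ qMinor B α β ≠ 0} := by
  set S := {k : ℕ | 1 ≤ k ∧ ∃ α β : Finset m, IsQPPair k α β ∧ qMinor B α β ≠ 0}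
  have hle : ∀ k ∈ S, k ≤ B.rank := by
    rintro k ⟨-, α, β, ⟨rfl, -⟩, h⟩
    exact card_le_rank_of_qMinor_ne_zero h
  obtain hr | hr := Nat.eq_zero_or_pos B.rank
  · have hS : S = ∅ := eq_empty_of_forall_notMem fun k hk => by
      have := hle k hk
      have := hk.1
      omega
    rw [hS, hr, csSup_empty, Nat.bot_eq_zero]
  · obtain ⟨s, hs, hdet⟩ := hB.exists_det_submatrix_ne_zero
    have hmem : B.rank ∈ S := ⟨hr, s, s, ⟨hs, hs, by rw [Finset.inter_self, hs]; omega⟩,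
      by rwa [qMinor_self]⟩
    exact (IsGreatest.csSup_eq ⟨hmem, hle⟩).symm

end QuasiPrincipal

/-- the rank of a symmetric matrix `B` equals the largest order of a nonzero
quasi-principal minor of `B` (with the maximum over the empty set being `0`); in
particular, it equals the index of the last term of `qpr(B)` that is `A` or `S`
(and is `0` if there is no such term). -/
theorem stmt_5 {F : Type*} [Field F] {n : ℕ} (B : Matrix (Fin n) (Fin n) F)
    (hB : B.IsSymm) :
    B.rank = sSup {k : ℕ | 1 ≤ k ∧
        ∃ α β : Finset (Fin n), IsQPPair k α β ∧ qMinor B α β ≠ 0} ∧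
      B.rank = sSup {k : ℕ | 1 ≤ k ∧ k ≤ n ∧ qprEntry B k ≠ QPR.N} := by
  have hrank := hB.rank_eq_sSup_qMinor_ne_zero
  refine ⟨hrank, hrank.trans (congrArg sSup (Set.ext fun k => ?_))⟩
  constructor
  · rintro ⟨hk, α, β, hαβ, hne⟩
    have hkn : k ≤ n := by simpa [hαβ.1] using α.card_le_univ
    exact ⟨hk, hkn, (qprEntry_ne_N_iff (by simpa)).mpr ⟨α, β, hαβ, hne⟩⟩
  · rintro ⟨hk, hkn, hq⟩
    exact ⟨hk, (qprEntry_ne_N_iff (by simpa)).mp hq⟩
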